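/- arXiv:2103.02784 — 4 statements merged into one kernel-verified Lean document; each statement's English description precedes it below -/
import Mathlib

section
/- Let f : ℝ^n → ℝ be c-strongly convex and differentiable on a nonempty compact convex set X ⊆ ℝ^n, and let A be an m×n real matrix. For λ ∈ ℝ^m, define x(λ) as the unique minimizer over X of x ↦ f(x) + ⟨Aᵀλ, x⟩. Then x(λ) is (‖A‖_F / c)-Lipschitz in λ: for all λ, μ ∈ ℝ^m, ‖x(λ) − x(μ)‖ ≤ (‖A‖_F / c)·‖λ − μ‖. -/
open scoped InnerProductSpace
open Matrix

/-- Frobenius norm of a real matrix. -/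
noncomputable def frobNorm {m n : ℕ} (A : Matrix (Fin m) (Fin n) ℝ) : ℝ :=
  Real.sqrt (∑ i, ∑ j, (A i j) ^ 2)

/-- View a plain vector as an element of Euclidean space. -/
def toE {k : ℕ} (v : Fin k → ℝ) : EuclideanSpace ℝ (Fin k) := WithLp.toLp 2 v

lemma frobNorm_nonneg {m n : ℕ} (A : Matrix (Fin m) (Fin n) ℝ) : 0 ≤ frobNorm A :=
  Real.sqrt_nonneg _

lemma norm_mulVec_le {m n : ℕ} (A : Matrix (Fin m) (Fin n) ℝ)
    (v : EuclideanSpace ℝ (Fin m)) : ‖toE (Aᵀ.mulVec v)‖ ≤ frobNorm A * ‖v‖ := by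
  have h1 : ‖toE (Aᵀ.mulVec v)‖ ^ 2 ≤ (frobNorm A * ‖v‖) ^ 2 := by
    rw [EuclideanSpace.norm_eq]
    rw [Real.sq_sqrt (by positivity)]
    have hfrob : frobNorm A ^ 2 = ∑ i, ∑ j, (A i j) ^ 2 := by
      rw [frobNorm, Real.sq_sqrt (by positivity)]
    have hv : ‖v‖ ^ 2 = ∑ i, (v i) ^ 2 := by
      rw [EuclideanSpace.norm_eq, Real.sq_sqrt (by positivity)]
      simp [sq_abs]
    calc ∑ j, ‖toE (Aᵀ.mulVec v) j‖ ^ 2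
        = ∑ j, (∑ i, A i j * v i) ^ 2 := by
          refine Finset.sum_congr rfl fun j _ => ?_
          simp only [Real.norm_eq_abs, sq_abs]
          congr 1
      _ ≤ ∑ j, (∑ i, (A i j) ^ 2) * (∑ i, (v i) ^ 2) := by
          refine Finset.sum_le_sum fun j _ => ?_
          exact Finset.sum_mul_sq_le_sq_mul_sq _ _ _
      _ = (∑ i, ∑ j, (A i j) ^ 2) * (∑ i, (v i) ^ 2) := by
          rw [← Finset.sum_mul, Finset.sum_comm]
      _ = (frobNorm A * ‖v‖) ^ 2 := by rw [mul_pow, hfrob, hv]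
  have h2 := Real.sqrt_le_sqrt h1
  rwa [Real.sqrt_sq (norm_nonneg _), Real.sqrt_sq (mul_nonneg (frobNorm_nonneg A) (norm_nonneg v))] at h2

lemma var_ineq {n : ℕ} {X : Set (EuclideanSpace ℝ (Fin n))} (hXcvx : Convex ℝ X)
    {f : EuclideanSpace ℝ (Fin n) → ℝ} {G w x : EuclideanSpace ℝ (Fin n)}
    (hx : x ∈ X) (hG : HasGradientAt f G x)
    (hmin : ∀ y ∈ X, f x + ⟪w, x⟫_ℝ ≤ f y + ⟪w, y⟫_ℝ)
    {y : EuclideanSpace ℝ (Fin n)} (hy : y ∈ X) :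
    0 ≤ ⟪G + w, y - x⟫_ℝ := by
  set F : EuclideanSpace ℝ (Fin n) → ℝ := fun z => f z + ⟪w, z⟫_ℝ with hF
  have hD : HasFDerivAt F (InnerProductSpace.toDual ℝ _ G + innerSL ℝ w : _ →L[ℝ] ℝ) x := by
    have h1 : HasFDerivAt f (InnerProductSpace.toDual ℝ _ G) x := hG.hasFDerivAt
    have h2 : HasFDerivAt (fun z => ⟪w, z⟫_ℝ) (innerSL ℝ w : _ →L[ℝ] ℝ) x :=
      (innerSL ℝ w).hasFDerivAt
    exact h1.add h2
  have hminOn : IsMinOn F X x := fun z hz => hmin z hz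
  have hcone : y - x ∈ posTangentConeAt X x :=
    sub_mem_posTangentConeAt_of_segment_subset (hXcvx.segment_subset hx hy)
  have := hminOn.localize.hasFDerivWithinAt_nonneg hD.hasFDerivWithinAt hcone
  simpa [inner_add_left] using this

/-- If `f` is `c`-strongly convex and differentiable on a nonempty compact convex set `X`,
and `x(λ)` is the unique minimizer over `X` of `x ↦ f(x) + ⟨Aᵀλ, x⟩`, then `x(·)` is
`(‖A‖_F / c)`-Lipschitz. -/
theorem lipschitz_of_dual_minimizer {n m : ℕ} (c : ℝ) (hc : 0 < c)
    (X : Set (EuclideanSpace ℝ (Fin n)))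
    (hXne : X.Nonempty) (hXcpt : IsCompact X) (hXcvx : Convex ℝ X)
    (f : EuclideanSpace ℝ (Fin n) → ℝ)
    (g : EuclideanSpace ℝ (Fin n) → EuclideanSpace ℝ (Fin n))
    (hdiff : ∀ x ∈ X, HasGradientAt f (g x) x)
    (hstrong : ∀ x ∈ X, ∀ y ∈ X, ⟪g x - g y, x - y⟫_ℝ ≥ c * ‖x - y‖ ^ 2)
    (A : Matrix (Fin m) (Fin n) ℝ)
    (xmin : EuclideanSpace ℝ (Fin m) → EuclideanSpace ℝ (Fin n))
    (hxmin : ∀ lam : EuclideanSpace ℝ (Fin m),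
      xmin lam ∈ X ∧
      ∀ y ∈ X,
        f (xmin lam) + ⟪toE (Aᵀ.mulVec lam), xmin lam⟫_ℝ ≤
          f y + ⟪toE (Aᵀ.mulVec lam), y⟫_ℝ) :
    ∀ lam mu : EuclideanSpace ℝ (Fin m),
      ‖xmin lam - xmin mu‖ ≤ (frobNorm A / c) * ‖lam - mu‖ := by
  intro lam mu
  set xl := xmin lam with hxl
  set xm := xmin mu with hxm
  set wl := toE (Aᵀ.mulVec lam) with hwl
  set wm := toE (Aᵀ.mulVec mu) with hwm
  set d := xl - xm with hd
  obtain ⟨hxlX, hminl⟩ := hxmin lam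
  obtain ⟨hxmX, hminm⟩ := hxmin mu
  have h1 : 0 ≤ ⟪g xl + wl, xm - xl⟫_ℝ :=
    var_ineq hXcvx hxlX (hdiff _ hxlX) hminl hxmX
  have h2 : 0 ≤ ⟪g xm + wm, xl - xm⟫_ℝ :=
    var_ineq hXcvx hxmX (hdiff _ hxmX) hminm hxlX
  have e1 : ⟪g xl + wl, xm - xl⟫_ℝ = -(⟪g xl, d⟫_ℝ + ⟪wl, d⟫_ℝ) := by
    rw [show xm - xl = -d from (neg_sub xl xm).symm, inner_neg_right, inner_add_left]
  have e2 : ⟪g xm + wm, xl - xm⟫_ℝ = ⟪g xm, d⟫_ℝ + ⟪wm, d⟫_ℝ := inner_add_left _ _ _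
  have hs : c * ‖d‖ ^ 2 ≤ ⟪g xl, d⟫_ℝ - ⟪g xm, d⟫_ℝ := by
    have := hstrong xl hxlX xm hxmX
    rwa [inner_sub_left] at this
  have key : c * ‖d‖ ^ 2 ≤ ⟪wm - wl, d⟫_ℝ := by
    rw [inner_sub_left]
    rw [e1] at h1; rw [e2] at h2
    linarith
  have hsub : wm - wl = toE (Aᵀ.mulVec (mu - lam)) := by
    rw [hwm, hwl]
    ext j
    simp [toE, Matrix.mulVec_sub]
  have hbound : ⟪wm - wl, d⟫_ℝ ≤ frobNorm A * ‖lam - mu‖ * ‖d‖ := by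
    calc ⟪wm - wl, d⟫_ℝ ≤ ‖wm - wl‖ * ‖d‖ := real_inner_le_norm _ _
      _ ≤ frobNorm A * ‖lam - mu‖ * ‖d‖ := by
          refine mul_le_mul_of_nonneg_right ?_ (norm_nonneg _)
          rw [hsub]
          calc ‖toE (Aᵀ.mulVec (mu - lam))‖ ≤ frobNorm A * ‖mu - lam‖ :=
                norm_mulVec_le A (mu - lam)
            _ = frobNorm A * ‖lam - mu‖ := by rw [norm_sub_rev]
  rcases eq_or_ne d 0 with h0 | h0
  · rw [hd.trans h0, norm_zero]
    exact mul_nonneg (div_nonneg (frobNorm_nonneg A) hc.le) (norm_nonneg _)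
  · have hdpos : 0 < ‖d‖ := norm_pos_iff.mpr h0
    have : c * ‖d‖ ≤ frobNorm A * ‖lam - mu‖ := by
      have := key.trans hbound
      nlinarith
    rw [div_mul_eq_mul_div, le_div_iff₀ hc]
    calc ‖xl - xm‖ * c = c * ‖d‖ := by rw [hd, mul_comm]
      _ ≤ frobNorm A * ‖lam - mu‖ := this
end

section
/- Let f : ℝ^n → ℝ be c-strongly convex and differentiable on a nonempty compact convex set X ⊆ ℝ^n, A an m×n matrix, D(λ) = min_{x ∈ X} [f(x) + ⟨λ, Ax⟩] with unique minimizer x(λ), and L = ‖A‖_F²/c. Suppose x̃(λ) ∈ X satisfies |D(λ) − (f(x̃(λ)) + ⟨λ, A x̃(λ)⟩)| ≤ ε. Writing D̃(λ) = f(x̃(λ)) + ⟨λ, A x̃(λ)⟩, then for all λ, μ ∈ ℝ^m with λ, μ ≥ 0: 0 ≤ D̃(λ) − D(μ) + ⟨μ − λ, A x̃(λ)⟩ ≤ L‖μ − λ‖² + 2ε. -/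
open scoped InnerProductSpace
open Matrix

section Aux

variable {m n : ℕ}

lemma inner_toE_mulVec (A : Matrix (Fin m) (Fin n) ℝ) (w : EuclideanSpace ℝ (Fin m))
    (x : EuclideanSpace ℝ (Fin n)) :
    ⟪w, toE (A.mulVec x)⟫_ℝ = ⟪toE (Aᵀ.mulVec w), x⟫_ℝ := by
  simp only [toE, PiLp.inner_apply, RCLike.inner_apply, starRingEnd_apply, star_trivial,
    mulVec, dotProduct, transpose_apply]
  simp_rw [Finset.mul_sum, Finset.sum_mul]
  rw [Finset.sum_comm]
  apply Finset.sum_congr rfl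
  intro j _
  apply Finset.sum_congr rfl
  intro i _
  ring

lemma inner_toE_mulVec_sub (A : Matrix (Fin m) (Fin n) ℝ) (w : EuclideanSpace ℝ (Fin m))
    (a b : EuclideanSpace ℝ (Fin n)) :
    ⟪w, toE (A.mulVec (a - b))⟫_ℝ
      = ⟪w, toE (A.mulVec a)⟫_ℝ - ⟪w, toE (A.mulVec b)⟫_ℝ := by
  rw [inner_toE_mulVec, inner_toE_mulVec, inner_toE_mulVec, ← inner_sub_right]
  rfl

lemma norm_toE_mulVec_le (A : Matrix (Fin m) (Fin n) ℝ) (x : EuclideanSpace ℝ (Fin n)) :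
    ‖toE (A.mulVec x)‖ ≤ frobNorm A * ‖x‖ := by
  have h1 : ‖toE (A.mulVec x)‖ = Real.sqrt (∑ i, (A.mulVec x i) ^ 2) := by
    rw [EuclideanSpace.norm_eq]
    congr 1
    apply Finset.sum_congr rfl
    intro i _
    rw [Real.norm_eq_abs, sq_abs]
    rfl
  have h2 : ‖x‖ = Real.sqrt (∑ j, (x j) ^ 2) := by
    rw [EuclideanSpace.norm_eq]
    congr 1
    exact Finset.sum_congr rfl fun j _ => by rw [Real.norm_eq_abs, sq_abs]
  rw [h1, h2, frobNorm, ← Real.sqrt_mul (by positivity)]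
  apply Real.sqrt_le_sqrt
  rw [Finset.sum_mul]
  apply Finset.sum_le_sum
  intro i _
  calc (A.mulVec x i) ^ 2 = (∑ j, A i j * x j) ^ 2 := rfl
    _ ≤ (∑ j, (A i j) ^ 2) * ∑ j, (x j) ^ 2 :=
        Finset.sum_mul_sq_le_sq_mul_sq _ _ _

lemma inner_toE_mulVec_le (A : Matrix (Fin m) (Fin n) ℝ) (w : EuclideanSpace ℝ (Fin m))
    (x : EuclideanSpace ℝ (Fin n)) :
    ⟪w, toE (A.mulVec x)⟫_ℝ ≤ frobNorm A * ‖w‖ * ‖x‖ := by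
  calc ⟪w, toE (A.mulVec x)⟫_ℝ ≤ ‖w‖ * ‖toE (A.mulVec x)‖ := real_inner_le_norm _ _
    _ ≤ ‖w‖ * (frobNorm A * ‖x‖) :=
        mul_le_mul_of_nonneg_left (norm_toE_mulVec_le A x) (norm_nonneg _)
    _ = frobNorm A * ‖w‖ * ‖x‖ := by ring

lemma neg_inner_toE_mulVec_le (A : Matrix (Fin m) (Fin n) ℝ) (w : EuclideanSpace ℝ (Fin m))
    (x : EuclideanSpace ℝ (Fin n)) :
    -⟪w, toE (A.mulVec x)⟫_ℝ ≤ frobNorm A * ‖w‖ * ‖x‖ := by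
  have h := inner_toE_mulVec_le A (-w) x
  rw [inner_neg_left] at h
  simpa using h

lemma key_arith {t pz q1 qt c K : ℝ} (ht0 : 0 < t)
    (hqt : qt ≤ (1 - t) * pz + t * q1) (hlow : pz - c / 2 * t ^ 2 * K ≤ qt) :
    pz - q1 ≤ c / 2 * K * t :=
  le_of_mul_le_mul_left (by nlinarith) ht0

lemma limit_arith {a b B : ℝ} (hB : 0 ≤ B)
    (h : ∀ t : ℝ, 0 < t → t ≤ 1 → a - b ≤ B * t) : a ≤ b := by
  by_contra hcon
  push_neg at hcon
  have hd0 : 0 < a - b := by linarith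
  set d := a - b with hd
  set t := min 1 (d / (2 * (B + 1))) with ht
  have ht0 : 0 < t := lt_min one_pos (by positivity)
  have ht1 : t ≤ 1 := min_le_left _ _
  have h1 := h t ht0 ht1
  have h2 : t ≤ d / (2 * (B + 1)) := min_le_right _ _
  have h3 : B * t ≤ B * (d / (2 * (B + 1))) := mul_le_mul_of_nonneg_left h2 hB
  have h4 : B * (d / (2 * (B + 1))) ≤ d / 2 := by
    rw [← mul_div_assoc, div_le_div_iff₀ (by positivity) two_pos]
    nlinarith
  linarith

/-- Quadratic growth at a constrained minimizer. -/
lemma quad_growth {n : ℕ} {c : ℝ} (hc : 0 < c) {X : Set (EuclideanSpace ℝ (Fin n))}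
    (hXcvx : Convex ℝ X) {φ : EuclideanSpace ℝ (Fin n) → ℝ}
    {G : EuclideanSpace ℝ (Fin n) → EuclideanSpace ℝ (Fin n)}
    (hdiff : ∀ x ∈ X, HasGradientAt φ (G x) x)
    (hmono : ∀ x ∈ X, ∀ y ∈ X, ⟪G x - G y, x - y⟫_ℝ ≥ c * ‖x - y‖ ^ 2)
    {z : EuclideanSpace ℝ (Fin n)} (hz : z ∈ X) (hmin : ∀ y ∈ X, φ z ≤ φ y) :
    ∀ y ∈ X, φ z + c / 2 * ‖y - z‖ ^ 2 ≤ φ y := by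
  intro y hy
  set v : EuclideanSpace ℝ (Fin n) := y - z with hv
  set K : ℝ := ‖v‖ ^ 2 with hK
  have hK0 : 0 ≤ K := sq_nonneg _
  set γ : ℝ → EuclideanSpace ℝ (Fin n) := fun t => z + t • v with hγ
  have hγ0 : γ 0 = z := by simp [hγ]
  have hγ1 : γ 1 = y := by simp [hγ, hv]
  have hmem : ∀ t ∈ Set.Icc (0:ℝ) 1, γ t ∈ X := by
    intro t ht
    have heq : γ t = (1 - t) • z + t • y := by
      simp only [hγ, hv, smul_sub, sub_smul, one_smul]
      abel
    rw [heq]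
    exact hXcvx hz hy (by linarith [ht.2]) ht.1 (by ring)
  set q : ℝ → ℝ := fun t => φ (γ t) - c / 2 * t ^ 2 * K with hq
  have hderiv : ∀ t ∈ Set.Icc (0:ℝ) 1,
      HasDerivAt q (⟪G (γ t), v⟫_ℝ - c * t * K) t := by
    intro t ht
    have hline : HasDerivAt γ v t := by
      have h1 : HasDerivAt (fun s : ℝ => s • v) ((1:ℝ) • v) t :=
        (hasDerivAt_id t).smul_const v
      simpa [hγ] using h1.const_add z
    have hcomp : HasDerivAt (fun s => φ (γ s)) (⟪G (γ t), v⟫_ℝ) t := by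
      have hF : HasFDerivAt φ (InnerProductSpace.toDual ℝ _ (G (γ t))) (γ t) :=
        (hdiff (γ t) (hmem t ht)).hasFDerivAt
      have := hF.comp_hasDerivAt t hline
      simp only [InnerProductSpace.toDual_apply_apply] at this
      exact this
    have hquad : HasDerivAt (fun s : ℝ => c / 2 * s ^ 2 * K) (c * t * K) t := by
      have h1 : HasDerivAt (fun s : ℝ => s ^ 2) (2 * t) t := by
        simpa using hasDerivAt_pow 2 t
      have h2 := (h1.const_mul (c / 2)).mul_const K
      convert h2 using 1
      all_goals try rfl
      ring
    exact hcomp.sub hquad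
  have hcont : ContinuousOn q (Set.Icc 0 1) := fun t ht =>
    (hderiv t ht).differentiableAt.continuousAt.continuousWithinAt
  have hdiffOn : DifferentiableOn ℝ q (interior (Set.Icc (0:ℝ) 1)) := by
    intro t ht
    rw [interior_Icc] at ht
    exact (hderiv t (Set.Ioo_subset_Icc_self ht)).differentiableAt.differentiableWithinAt
  have hmonoD : MonotoneOn (deriv q) (interior (Set.Icc (0:ℝ) 1)) := by
    rw [interior_Icc]
    intro s hs t ht hst
    rw [(hderiv s (Set.Ioo_subset_Icc_self hs)).deriv,
      (hderiv t (Set.Ioo_subset_Icc_self ht)).deriv]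
    rcases eq_or_lt_of_le hst with h | h
    · rw [h]
    · have hmem_s := hmem s (Set.Ioo_subset_Icc_self hs)
      have hmem_t := hmem t (Set.Ioo_subset_Icc_self ht)
      have hdiffγ : γ t - γ s = (t - s) • v := by
        simp only [hγ, sub_smul]
        abel
      have hmon := hmono (γ t) hmem_t (γ s) hmem_s
      rw [hdiffγ] at hmon
      have hnorm : ‖(t - s) • v‖ ^ 2 = (t - s) ^ 2 * K := by
        rw [norm_smul, mul_pow, hK, Real.norm_eq_abs, sq_abs]
      rw [hnorm, real_inner_smul_right] at hmon
      have hts : 0 < t - s := by linarith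
      have hineq : c * (t - s) * K ≤ ⟪G (γ t) - G (γ s), v⟫_ℝ := by
        nlinarith [hmon, hts]
      rw [inner_sub_left] at hineq
      nlinarith [hineq, hts]
  have hconv : ConvexOn ℝ (Set.Icc (0:ℝ) 1) q :=
    hmonoD.convexOn_of_deriv (convex_Icc 0 1) hcont hdiffOn
  have hq0 : q 0 = φ z := by simp [hq, hγ0]
  have hq1 : q 1 = φ y - c / 2 * K := by simp [hq, hγ1]
  have hkey : ∀ t : ℝ, 0 < t → t ≤ 1 → q 0 - q 1 ≤ c / 2 * K * t := by
    intro t ht0 ht1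
    have hqt : q ((1 - t) • (0:ℝ) + t • (1:ℝ)) ≤ (1 - t) • q 0 + t • q 1 :=
      hconv.2 (Set.left_mem_Icc.2 zero_le_one) (Set.right_mem_Icc.2 zero_le_one)
        (by linarith : (0:ℝ) ≤ 1 - t) (le_of_lt ht0) (by ring)
    simp only [smul_eq_mul, mul_zero, mul_one, zero_add] at hqt
    have hlow : φ z - c / 2 * t ^ 2 * K ≤ q t := by
      have := hmin (γ t) (hmem t ⟨le_of_lt ht0, ht1⟩)
      simp only [hq]
      linarith
    rw [hq0] at hqt ⊢
    exact key_arith ht0 hqt hlow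
  have hB0 : 0 ≤ c / 2 * K := mul_nonneg (by linarith) hK0
  have hfin : q 0 ≤ q 1 := limit_arith hB0 hkey
  rw [hq0, hq1] at hfin
  linarith

end Aux

/-- Sandwich bound for the inexact dual value: with `D̃(λ) = f(x̃(λ)) + ⟨λ, A x̃(λ)⟩` and
`|D(λ) − D̃(λ)| ≤ ε`, for all `λ, μ ≥ 0`:
`0 ≤ D̃(λ) − D(μ) + ⟨μ − λ, A x̃(λ)⟩ ≤ L‖μ − λ‖² + 2ε`, where `L = ‖A‖_F²/c`. -/
theorem inexact_dual_sandwich {n m : ℕ} (c : ℝ) (hc : 0 < c)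
    (X : Set (EuclideanSpace ℝ (Fin n)))
    (hXne : X.Nonempty) (hXcpt : IsCompact X) (hXcvx : Convex ℝ X)
    (f : EuclideanSpace ℝ (Fin n) → ℝ)
    (g : EuclideanSpace ℝ (Fin n) → EuclideanSpace ℝ (Fin n))
    (hdiff : ∀ x ∈ X, HasGradientAt f (g x) x)
    (hstrong : ∀ x ∈ X, ∀ y ∈ X, ⟪g x - g y, x - y⟫_ℝ ≥ c * ‖x - y‖ ^ 2)
    (A : Matrix (Fin m) (Fin n) ℝ)
    (xmin : EuclideanSpace ℝ (Fin m) → EuclideanSpace ℝ (Fin n))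
    (hxmin : ∀ lam : EuclideanSpace ℝ (Fin m),
      xmin lam ∈ X ∧ ∀ y ∈ X,
        f (xmin lam) + ⟪lam, toE (A.mulVec (xmin lam))⟫_ℝ ≤ f y + ⟪lam, toE (A.mulVec y)⟫_ℝ)
    (D : EuclideanSpace ℝ (Fin m) → ℝ)
    (hD : ∀ lam, D lam = f (xmin lam) + ⟪lam, toE (A.mulVec (xmin lam))⟫_ℝ)
    (xt : EuclideanSpace ℝ (Fin m) → EuclideanSpace ℝ (Fin n))
    (hxtX : ∀ lam, xt lam ∈ X)
    (ε : ℝ) (hε : 0 ≤ ε)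
    (hinexact : ∀ lam : EuclideanSpace ℝ (Fin m), (∀ i, 0 ≤ lam i) →
      |D lam - (f (xt lam) + ⟪lam, toE (A.mulVec (xt lam))⟫_ℝ)| ≤ ε) :
    ∀ lam mu : EuclideanSpace ℝ (Fin m), (∀ i, 0 ≤ lam i) → (∀ i, 0 ≤ mu i) →
      0 ≤ (f (xt lam) + ⟪lam, toE (A.mulVec (xt lam))⟫_ℝ) - D mu +
            ⟪mu - lam, toE (A.mulVec (xt lam))⟫_ℝ ∧
      (f (xt lam) + ⟪lam, toE (A.mulVec (xt lam))⟫_ℝ) - D mu +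
            ⟪mu - lam, toE (A.mulVec (xt lam))⟫_ℝ ≤
          (frobNorm A ^ 2 / c) * ‖mu - lam‖ ^ 2 + 2 * ε := by
  -- Quadratic growth of the Lagrangian at its minimizer, for every multiplier ν
  have hQG : ∀ ν : EuclideanSpace ℝ (Fin m), ∀ y ∈ X,
      (f (xmin ν) + ⟪ν, toE (A.mulVec (xmin ν))⟫_ℝ) + c / 2 * ‖y - xmin ν‖ ^ 2 ≤
        f y + ⟪ν, toE (A.mulVec y)⟫_ℝ := by
    intro ν
    set w : EuclideanSpace ℝ (Fin n) := toE (Aᵀ.mulVec ν) with hw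
    have hgrad : ∀ x ∈ X,
        HasGradientAt (fun x => f x + ⟪ν, toE (A.mulVec x)⟫_ℝ) (g x + w) x := by
      intro x hx
      have hlinF : HasFDerivAt (fun y : EuclideanSpace ℝ (Fin n) => ⟪ν, toE (A.mulVec y)⟫_ℝ)
          (InnerProductSpace.toDual ℝ _ w) x := by
        have h1 := (InnerProductSpace.toDual ℝ (EuclideanSpace ℝ (Fin n)) w).hasFDerivAt (x := x)
        apply h1.congr_of_eventuallyEq
        filter_upwards with y
        rw [InnerProductSpace.toDual_apply_apply, inner_toE_mulVec]
      rw [hasGradientAt_iff_hasFDerivAt, map_add]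
      exact (hdiff x hx).hasFDerivAt.add hlinF
    have hmono : ∀ x ∈ X, ∀ y ∈ X,
        ⟪(g x + w) - (g y + w), x - y⟫_ℝ ≥ c * ‖x - y‖ ^ 2 := by
      intro x hx y hy
      rw [add_sub_add_right_eq_sub]
      exact hstrong x hx y hy
    exact quad_growth hc hXcvx hgrad hmono (hxmin ν).1 (hxmin ν).2
  intro lam mu hlam hmu
  have hxtX' := hxtX lam
  have hxlX := (hxmin lam).1
  have hxmX := (hxmin mu).1
  have habs := hinexact lam hlam
  rw [abs_le] at habs
  -- lower bound
  have hlow0 : D mu ≤ f (xt lam) + ⟪mu, toE (A.mulVec (xt lam))⟫_ℝ := by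
    rw [hD mu]
    exact (hxmin mu).2 (xt lam) hxtX'
  have hsplit_t : ⟪mu - lam, toE (A.mulVec (xt lam))⟫_ℝ
      = ⟪mu, toE (A.mulVec (xt lam))⟫_ℝ - ⟪lam, toE (A.mulVec (xt lam))⟫_ℝ :=
    inner_sub_left _ _ _
  constructor
  · linarith [hlow0, hsplit_t]
  -- upper bound
  · have h2 : D lam + c / 2 * ‖xt lam - xmin lam‖ ^ 2 ≤
        f (xt lam) + ⟪lam, toE (A.mulVec (xt lam))⟫_ℝ := by
      rw [hD lam]
      exact hQG lam (xt lam) hxtX'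
    have h3 : D lam + c / 2 * ‖xmin mu - xmin lam‖ ^ 2 ≤
        f (xmin mu) + ⟪lam, toE (A.mulVec (xmin mu))⟫_ℝ := by
      rw [hD lam]
      exact hQG lam (xmin mu) hxmX
    have hsplit_m : ⟪mu - lam, toE (A.mulVec (xmin mu))⟫_ℝ
        = ⟪mu, toE (A.mulVec (xmin mu))⟫_ℝ - ⟪lam, toE (A.mulVec (xmin mu))⟫_ℝ :=
      inner_sub_left _ _ _
    have hI1 : ⟪mu - lam, toE (A.mulVec (xt lam - xmin lam))⟫_ℝ
        = ⟪mu - lam, toE (A.mulVec (xt lam))⟫_ℝ - ⟪mu - lam, toE (A.mulVec (xmin lam))⟫_ℝ :=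
      inner_toE_mulVec_sub A _ _ _
    have hI2 : ⟪mu - lam, toE (A.mulVec (xmin mu - xmin lam))⟫_ℝ
        = ⟪mu - lam, toE (A.mulVec (xmin mu))⟫_ℝ - ⟪mu - lam, toE (A.mulVec (xmin lam))⟫_ℝ :=
      inner_toE_mulVec_sub A _ _ _
    have hb1 : ⟪mu - lam, toE (A.mulVec (xt lam - xmin lam))⟫_ℝ ≤
        frobNorm A * ‖mu - lam‖ * ‖xt lam - xmin lam‖ := inner_toE_mulVec_le A _ _
    have hb2 : -⟪mu - lam, toE (A.mulVec (xmin mu - xmin lam))⟫_ℝ ≤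
        frobNorm A * ‖mu - lam‖ * ‖xmin mu - xmin lam‖ := neg_inner_toE_mulVec_le A _ _
    have hDmu : D mu = f (xmin mu) + ⟪mu, toE (A.mulVec (xmin mu))⟫_ℝ := hD mu
    -- abbreviations for the scalars involved
    have hubound : (f (xt lam) + ⟪lam, toE (A.mulVec (xt lam))⟫_ℝ) - D mu +
          ⟪mu - lam, toE (A.mulVec (xt lam))⟫_ℝ ≤
        ε + frobNorm A * ‖mu - lam‖ * ‖xt lam - xmin lam‖ +
          (frobNorm A * ‖mu - lam‖ * ‖xmin mu - xmin lam‖ -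
            c / 2 * ‖xmin mu - xmin lam‖ ^ 2) := by
      linarith [habs.1, h3, hb1, hb2]
    have h2' : c / 2 * ‖xt lam - xmin lam‖ ^ 2 ≤ ε := by linarith [habs.1, h2]
    set F := frobNorm A with hF
    set Kn := ‖mu - lam‖ with hKn
    set rt := ‖xt lam - xmin lam‖ with hrt
    set rr := ‖xmin mu - xmin lam‖ with hrr
    have hF0 : 0 ≤ F := Real.sqrt_nonneg _
    have hKn0 : 0 ≤ Kn := norm_nonneg _
    have hrt0 : 0 ≤ rt := norm_nonneg _
    have hrr0 : 0 ≤ rr := norm_nonneg _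
    have hfrac : F ^ 2 / c * Kn ^ 2 + 2 * ε = (F ^ 2 * Kn ^ 2 + 2 * c * ε) / c := by
      field_simp
    rw [hfrac, le_div_iff₀ hc]
    have hc1 : c * (c / 2 * rt ^ 2) ≤ c * ε := mul_le_mul_of_nonneg_left h2' hc.le
    have hc2 := mul_le_mul_of_nonneg_left hubound hc.le
    nlinarith [hc2, hc1, sq_nonneg (F * Kn - c * rt), sq_nonneg (F * Kn - c * rr),
      mul_nonneg (mul_nonneg hF0 hKn0) hrt0, mul_nonneg (mul_nonneg hF0 hKn0) hrr0, hc]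
end

section
/- Let λ⁰ ≥ 0 in ℝ^m, α > 0, and suppose a sequence (λ^k, x̂^k) satisfies λ^{k+1} = [λ^k + α(A x̂^k − b)]⁺ for k = 0, …, K, where [·]⁺ is the componentwise positive part. Define x̄ = (1/(K+1)) ∑_{k=0}^K x̂^k. Then ‖[A x̄ − b]⁺‖ ≤ ‖λ^{K+1}‖ / (α(K+1)). -/
open Matrix

/-- Componentwise positive part. -/
def posPartE {k : ℕ} (v : EuclideanSpace ℝ (Fin k)) : EuclideanSpace ℝ (Fin k) :=
  WithLp.toLp 2 (fun i => max (v i) 0)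

/-- Constraint-violation bound for the averaged primal iterate of the dual update
`λ^{k+1} = [λ^k + α(A x̂^k − b)]⁺`:
`‖[A x̄ − b]⁺‖ ≤ ‖λ^{K+1}‖ / (α(K+1))`. -/
theorem avg_constraint_violation_bound {n m : ℕ}
    (A : Matrix (Fin m) (Fin n) ℝ) (b : EuclideanSpace ℝ (Fin m))
    (α : ℝ) (hα : 0 < α)
    (lam : ℕ → EuclideanSpace ℝ (Fin m))
    (xh : ℕ → EuclideanSpace ℝ (Fin n))
    (K : ℕ)
    (h0 : ∀ i, 0 ≤ lam 0 i)
    (hupd : ∀ k ≤ K, lam (k + 1) = posPartE (lam k + α • (toE (A.mulVec (xh k)) - b))) :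
    ‖posPartE (toE (A.mulVec ((K + 1 : ℝ)⁻¹ • ∑ k ∈ Finset.range (K + 1), xh k)) - b)‖ ≤
      ‖lam (K + 1)‖ / (α * (K + 1)) := by
  set N : ℕ := K + 1 with hN
  have hNpos : (0 : ℝ) < (N : ℝ) := by positivity
  have hc : (0 : ℝ) < α * N := by positivity
  -- key induction: partial sums bounded by lam
  have key : ∀ k ≤ N, ∀ i,
      α * ∑ j ∈ Finset.range k, ((A.mulVec (xh j)) i - b i) ≤ lam k i := by
    intro k hk
    induction k with
    | zero => intro i; simpa using h0 i
    | succ k ih =>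
      intro i
      have hkK : k ≤ K := Nat.lt_succ_iff.mp hk
      have hrec := hupd k hkK
      have h1 : lam k i + α * ((A.mulVec (xh k)) i - b i) ≤ lam (k + 1) i := by
        rw [hrec]
        exact le_max_left _ _
      have h2 := ih (le_of_lt (Nat.lt_of_succ_le hk)) i
      calc α * ∑ j ∈ Finset.range (k + 1), ((A.mulVec (xh j)) i - b i)
          = α * ∑ j ∈ Finset.range k, ((A.mulVec (xh j)) i - b i)
            + α * ((A.mulVec (xh k)) i - b i) := by
            rw [Finset.sum_range_succ]; ring
        _ ≤ lam k i + α * ((A.mulVec (xh k)) i - b i) := by linarith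
        _ ≤ lam (k + 1) i := h1
  have hlamN : ∀ i, 0 ≤ lam N i := by
    intro i
    rw [hupd K le_rfl]
    exact le_max_right _ _
  -- linearity of mulVec at component i
  have hlin : ∀ i,
      (A.mulVec ((N : ℝ)⁻¹ • ∑ k ∈ Finset.range N, xh k)) i
        = (N : ℝ)⁻¹ * ∑ k ∈ Finset.range N, (A.mulVec (xh k)) i := by
    intro i
    have : A.mulVec ((N : ℝ)⁻¹ • ∑ k ∈ Finset.range N, xh k)
        = (N : ℝ)⁻¹ • ∑ k ∈ Finset.range N, A.mulVec (xh k) := by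
      rw [Matrix.mulVec_smul]
      congr 1
      rw [WithLp.ofLp_sum]
      exact map_sum A.mulVecLin (fun k => (xh k).ofLp) (Finset.range N)
    rw [this]
    simp [Finset.sum_apply]
  -- pointwise bound on the posPart of the averaged residual
  set u : EuclideanSpace ℝ (Fin m) :=
    posPartE (toE (A.mulVec ((N : ℝ)⁻¹ • ∑ k ∈ Finset.range N, xh k)) - b) with hu
  have hpt : ∀ i, 0 ≤ u i ∧ u i ≤ lam N i / (α * N) := by
    intro i
    constructor
    · exact le_max_right _ _
    · have hres : (toE (A.mulVec ((N : ℝ)⁻¹ • ∑ k ∈ Finset.range N, xh k)) - b) i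
          = (N : ℝ)⁻¹ * ∑ k ∈ Finset.range N, ((A.mulVec (xh k)) i - b i) := by
        have hb : ∑ k ∈ Finset.range N, ((A.mulVec (xh k)) i - b i)
            = (∑ k ∈ Finset.range N, (A.mulVec (xh k)) i) - N * b i := by
          rw [Finset.sum_sub_distrib]; simp [mul_comm]
        show (A.mulVec ((N : ℝ)⁻¹ • ∑ k ∈ Finset.range N, xh k)) i - b i = _
        rw [hlin i, hb]
        field_simp
      have hk := key N le_rfl i
      have h1 : (N : ℝ)⁻¹ * ∑ k ∈ Finset.range N, ((A.mulVec (xh k)) i - b i)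
          ≤ lam N i / (α * N) := by
        rw [le_div_iff₀ hc]
        have hNe : (N : ℝ) ≠ 0 := hNpos.ne'
        have heq : (N : ℝ)⁻¹ * (∑ k ∈ Finset.range N, ((A.mulVec (xh k)) i - b i)) * (α * N)
            = α * ∑ k ∈ Finset.range N, ((A.mulVec (xh k)) i - b i) := by
          field_simp
        rw [heq]; exact hk
      have h2 : (0 : ℝ) ≤ lam N i / (α * N) := div_nonneg (hlamN i) hc.le
      show max ((toE (A.mulVec ((N : ℝ)⁻¹ • ∑ k ∈ Finset.range N, xh k)) - b) i) 0
          ≤ lam N i / (α * N)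
      rw [hres]
      exact max_le h1 h2
  -- conclude via norm comparison
  have hnorm : ‖u‖ ≤ ‖(α * N)⁻¹ • lam N‖ := by
    rw [EuclideanSpace.norm_eq, EuclideanSpace.norm_eq]
    apply Real.sqrt_le_sqrt
    apply Finset.sum_le_sum
    intro i _
    have h := hpt i
    have h3 : |u i| ≤ |((α * N : ℝ)⁻¹ • lam N) i| := by
      have : ((α * N : ℝ)⁻¹ • lam N) i = lam N i / (α * N) := by
        simp [div_eq_inv_mul]
      rw [this, abs_of_nonneg h.1, abs_of_nonneg (div_nonneg (hlamN i) hc.le)]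
      exact h.2
    calc ‖u i‖ ^ 2 = |u i| ^ 2 := by rw [Real.norm_eq_abs]
      _ ≤ |((α * N : ℝ)⁻¹ • lam N) i| ^ 2 := by
          exact pow_le_pow_left₀ (abs_nonneg _) h3 2
      _ = ‖((α * N : ℝ)⁻¹ • lam N) i‖ ^ 2 := by rw [Real.norm_eq_abs]
  have : ‖(α * (N : ℝ))⁻¹ • lam N‖ = ‖lam N‖ / (α * N) := by
    rw [norm_smul, Real.norm_eq_abs, abs_inv, abs_of_pos hc, div_eq_inv_mul]
  -- match the goal with u; note `(K + 1 : ℝ) = (N : ℝ)`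
  have hcast : ((K : ℝ) + 1) = (N : ℝ) := by push_cast [hN]; ring
  rw [hcast]
  calc ‖u‖ ≤ ‖(α * (N : ℝ))⁻¹ • lam N‖ := hnorm
    _ = ‖lam N‖ / (α * N) := this
end

section
/- Let F : ℝ^n → ℝ be c-strongly convex and differentiable on a convex set X, let (x*, λ*) satisfy the KKT conditions: ⟨∇F(x*) + Aᵀλ*, x − x*⟩ ≥ 0 for all x ∈ X, Ax* ≤ b, λ* ≥ 0, ⟨λ*, Ax* − b⟩ = 0. Then for any x̄ ∈ X: (c/2)‖x̄ − x*‖² ≤ F(x̄) − F(x*) + ‖λ*‖·‖[A x̄ − b]⁺‖. -/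
open scoped InnerProductSpace
open Matrix

/-- Componentwise positive part. -/
def posPart {k : ℕ} (v : EuclideanSpace ℝ (Fin k)) : EuclideanSpace ℝ (Fin k) :=
  WithLp.toLp 2 (fun i => max (v i) 0)

lemma adjoint_inner {n m : ℕ} (A : Matrix (Fin m) (Fin n) ℝ) (lam : EuclideanSpace ℝ (Fin m))
    (w : EuclideanSpace ℝ (Fin n)) :
    ⟪toE (Aᵀ.mulVec lam), w⟫_ℝ = ⟪lam, toE (A.mulVec w)⟫_ℝ := by
  simp only [PiLp.inner_apply, RCLike.inner_apply, starRingEnd_apply, star_trivial,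
    toE, WithLp.ofLp_toLp, Matrix.mulVec, dotProduct, Matrix.transpose_apply, Finset.sum_mul,
    Finset.mul_sum]
  rw [Finset.sum_comm]
  congr 1; ext j; congr 1; ext i; ring

/-- Under strong convexity of `F` and the KKT conditions at `(x*, λ*)`, for any `x̄ ∈ X`,
`(c/2)‖x̄ − x*‖² ≤ F(x̄) − F(x*) + ‖λ*‖·‖[A x̄ − b]⁺‖`. -/
theorem primal_variable_deviation_bound {n m : ℕ} (c : ℝ) (hc : 0 < c)
    (X : Set (EuclideanSpace ℝ (Fin n))) (hXcvx : Convex ℝ X)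
    (F : EuclideanSpace ℝ (Fin n) → ℝ)
    (gF : EuclideanSpace ℝ (Fin n) → EuclideanSpace ℝ (Fin n))
    (hdiff : ∀ x ∈ X, HasGradientAt F (gF x) x)
    (hstrong : ∀ x ∈ X, ∀ y ∈ X,
      F y ≥ F x + ⟪gF x, y - x⟫_ℝ + (c / 2) * ‖y - x‖ ^ 2)
    (A : Matrix (Fin m) (Fin n) ℝ) (b : EuclideanSpace ℝ (Fin m))
    (xStar : EuclideanSpace ℝ (Fin n)) (hxX : xStar ∈ X)
    (lamStar : EuclideanSpace ℝ (Fin m))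
    (hstat : ∀ x ∈ X, ⟪gF xStar + toE (Aᵀ.mulVec lamStar), x - xStar⟫_ℝ ≥ 0)
    (hfeas : ∀ i, (A.mulVec xStar) i ≤ b i)
    (hlamnn : ∀ i, 0 ≤ lamStar i)
    (hcs : ⟪lamStar, toE (A.mulVec xStar) - b⟫_ℝ = 0) :
    ∀ xbar ∈ X,
      (c / 2) * ‖xbar - xStar‖ ^ 2 ≤
        F xbar - F xStar + ‖lamStar‖ * ‖posPart (toE (A.mulVec xbar) - b)‖ := by
  intro xbar hxbar
  have h1 := hstrong xStar hxX xbar hxbar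
  have h2 := hstat xbar hxbar
  rw [inner_add_left] at h2
  -- ⟪Aᵀλ, xbar - xStar⟫ = ⟪λ, A xbar - A xStar⟫
  have key : ⟪toE (Aᵀ.mulVec lamStar), xbar - xStar⟫_ℝ
      = ⟪lamStar, toE (A.mulVec xbar) - b⟫_ℝ := by
    rw [adjoint_inner]
    have : toE (A.mulVec (WithLp.ofLp (xbar - xStar))) = (toE (A.mulVec xbar) - b) - (toE (A.mulVec xStar) - b) := by
      ext i
      simp [toE, Matrix.mulVec, dotProduct, PiLp.sub_apply, mul_sub, Finset.sum_sub_distrib]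
    rw [this, inner_sub_right, hcs, sub_zero]
  -- ⟪λ, v⟫ ≤ ⟪λ, posPart v⟫ ≤ ‖λ‖ ‖posPart v‖
  have h3 : ⟪lamStar, toE (A.mulVec xbar) - b⟫_ℝ
      ≤ ‖lamStar‖ * ‖posPart (toE (A.mulVec xbar) - b)‖ := by
    have step1 : ⟪lamStar, toE (A.mulVec xbar) - b⟫_ℝ
        ≤ ⟪lamStar, posPart (toE (A.mulVec xbar) - b)⟫_ℝ := by
      simp only [PiLp.inner_apply, RCLike.inner_apply, starRingEnd_apply, star_trivial]
      apply Finset.sum_le_sum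
      intro i _
      exact mul_le_mul_of_nonneg_right (le_max_left _ _) (hlamnn i)
    exact step1.trans (real_inner_le_norm _ _)
  nlinarith [h2, key ▸ h2]
end
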